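/- arXiv:0910.3326 — 7 statements merged into one kernel-verified Lean document; each statement's English description precedes it below -/
import Mathlib

section
/- Let Λ₀ be a finite-dimensional commutative real algebra with unit e₀ and basis (e₀,…,e_p) satisfying condition (A₀): Σ_{k=0}^{p} e_k² = 0. If f : U ⊆ Λ₀ → Λ₀ is C² and S-differentiable on the open set U, then f is harmonic: Σ_{k=0}^{p} ∂²f/∂(xᵏ)² = 0 on U. -/
/-!
Write `D²f(u, v)` for the second derivative of `f` at `x`. Differentiating the Cauchy–Riemann type
identity `∂ₖf = eₖ ∂₀f` once more gives `D²f(u, eₖ) = eₖ D²f(u, e₀)`; together with the symmetry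
of `D²f` this yields `D²f(eₖ, eₖ) = eₖ D²f(e₀, eₖ) = eₖ D²f(eₖ, e₀) = eₖ² D²f(e₀, e₀)`.
Summing over `k`, the Laplacian is `(∑ₖ eₖ²) D²f(e₀, e₀)`, which vanishes by (A₀).
-/

open Filter Topology

section SecondDerivative

variable {𝕜 E F : Type*} [NontriviallyNormedField 𝕜] [NormedAddCommGroup E] [NormedSpace 𝕜 E]

theorem fderiv_fderiv_apply_const [NormedAddCommGroup F] [NormedSpace 𝕜 F] {f : E → F} {x : E}
    (hf : DifferentiableAt 𝕜 (fderiv 𝕜 f) x) (v w : E) :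
    fderiv 𝕜 (fun y => fderiv 𝕜 f y v) x w = fderiv 𝕜 (fderiv 𝕜 f) x w v := by
  rw [fderiv_clm_apply hf (differentiableAt_const v)]
  simp

variable {A : Type*} [NormedCommRing A] [NormedAlgebra 𝕜 A]

theorem fderiv_fderiv_apply_eq_mul_of_eventually {f : E → A} {x : E} {v w : E} {c : A}
    (hf : DifferentiableAt 𝕜 (fderiv 𝕜 f) x)
    (hS : ∀ᶠ y in 𝓝 x, fderiv 𝕜 f y v = c * fderiv 𝕜 f y w) (u : E) :
    fderiv 𝕜 (fderiv 𝕜 f) x u v = c * fderiv 𝕜 (fderiv 𝕜 f) x u w := by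
  have hw : DifferentiableAt 𝕜 (fun y => fderiv 𝕜 f y w) x :=
    hf.clm_apply (differentiableAt_const w)
  have hS' : (fun y => fderiv 𝕜 f y v) =ᶠ[𝓝 x] fun y => c * fderiv 𝕜 f y w := hS
  rw [← fderiv_fderiv_apply_const hf, ← fderiv_fderiv_apply_const hf, hS'.fderiv_eq,
    fderiv_const_mul hw, smul_apply, smul_eq_mul]

theorem IsSymmSndFDerivAt.fderiv_fderiv_apply_self_eq_sq_mul {f : A → A} {x v w : A}
    (hsymm : IsSymmSndFDerivAt 𝕜 f x) (hf : DifferentiableAt 𝕜 (fderiv 𝕜 f) x)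
    (hS : ∀ᶠ y in 𝓝 x, fderiv 𝕜 f y v = v * fderiv 𝕜 f y w) :
    fderiv 𝕜 (fderiv 𝕜 f) x v v = v ^ 2 * fderiv 𝕜 (fderiv 𝕜 f) x w w := by
  calc fderiv 𝕜 (fderiv 𝕜 f) x v v
      = v * fderiv 𝕜 (fderiv 𝕜 f) x v w := fderiv_fderiv_apply_eq_mul_of_eventually hf hS v
    _ = v * fderiv 𝕜 (fderiv 𝕜 f) x w v := by rw [hsymm.eq]
    _ = v * (v * fderiv 𝕜 (fderiv 𝕜 f) x w w) := by
      rw [fderiv_fderiv_apply_eq_mul_of_eventually hf hS w]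
    _ = v ^ 2 * fderiv 𝕜 (fderiv 𝕜 f) x w w := by ring

end SecondDerivative

theorem stmt6_general {A : Type*} [NormedCommRing A] [NormedAlgebra ℝ A] {p : ℕ}
    (e : Module.Basis (Fin (p + 1)) ℝ A)
    (hA0 : ∑ k, (e k) ^ 2 = 0)
    (U : Set A) (hU : IsOpen U) (f : A → A) (hf : ContDiffOn ℝ 2 f U)
    (hS : ∀ x ∈ U, ∀ k, fderiv ℝ f x (e k) = e k * fderiv ℝ f x (e 0)) :
    ∀ x ∈ U, ∑ k, fderiv ℝ (fun y => fderiv ℝ f y (e k)) x (e k) = 0 := by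
  intro x hx
  have hfx : ContDiffAt ℝ 2 f x := hf.contDiffAt (hU.mem_nhds hx)
  have hdf : DifferentiableAt ℝ (fderiv ℝ f) x :=
    (hfx.fderiv_right (m := 1) le_rfl).differentiableAt one_ne_zero
  have hsymm : IsSymmSndFDerivAt ℝ f x := hfx.isSymmSndFDerivAt (by simp)
  have hSx : ∀ k, ∀ᶠ y in 𝓝 x, fderiv ℝ f y (e k) = e k * fderiv ℝ f y (e 0) := fun k =>
    eventually_of_mem (hU.mem_nhds hx) fun y hy => hS y hy k
  calc ∑ k, fderiv ℝ (fun y => fderiv ℝ f y (e k)) x (e k)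
      = ∑ k, e k ^ 2 * fderiv ℝ (fderiv ℝ f) x (e 0) (e 0) := by
        refine Finset.sum_congr rfl fun k _ => ?_
        rw [fderiv_fderiv_apply_const hdf, hsymm.fderiv_fderiv_apply_self_eq_sq_mul hdf (hSx k)]
    _ = 0 := by rw [← Finset.sum_mul, hA0, zero_mul]

/-- Under condition (A₀), a C² S-differentiable function on an open
subset of Λ₀ is harmonic: Σ_k ∂²f/∂(xᵏ)² = 0. -/
theorem stmt6 {A : Type*} [NormedCommRing A] [NormedAlgebra ℝ A] {p : ℕ}
    (e : Module.Basis (Fin (p + 1)) ℝ A) (he0 : e 0 = 1)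
    (hA0 : ∑ k, (e k) ^ 2 = 0)
    (U : Set A) (hU : IsOpen U) (f : A → A) (hf : ContDiffOn ℝ 2 f U)
    (hS : ∀ x ∈ U, ∀ k, fderiv ℝ f x (e k) = e k * fderiv ℝ f x (e 0)) :
    ∀ x ∈ U, ∑ k, fderiv ℝ (fun y => fderiv ℝ f y (e k)) x (e k) = 0 :=
  stmt6_general e hA0 U hU f hf hS
end

section
/- Under condition (A₀) on Λ₀, if f is S-differentiable on an open set U ⊆ Λ₀ and of class C², then each real-component function fⱼ of f (in the basis e₀,…,e_p) is a harmonic function on U ⊆ ℝ^{p+1}. -/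
/-!
Differentiating the S-differentiability relation `∂ₖf = eₖ ∂₀f` once more gives
`D²f(u, eₖ) = eₖ D²f(u, e₀)` for every direction `u`. Together with the symmetry of the second
derivative of a `C²` map this yields `D²f(eₖ, eₖ) = eₖ² D²f(e₀, e₀)`, so the Laplacian
`∑ₖ D²f(eₖ, eₖ)` equals `(∑ₖ eₖ²) D²f(e₀, e₀) = 0`. Each coordinate `fⱼ` is a continuous linear
functional of `f`, hence its Laplacian is the `j`-th coordinate of that of `f`, which vanishes.
-/

open Filter Topology

section SecondDerivative

variable {𝕜 E F G : Type*} [NontriviallyNormedField 𝕜]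
  [NormedAddCommGroup E] [NormedSpace 𝕜 E] [NormedAddCommGroup F] [NormedSpace 𝕜 F]
  [NormedAddCommGroup G] [NormedSpace 𝕜 G] {x : E}

theorem fderiv_clm_apply_const_apply {c : E → F →L[𝕜] G} (hc : DifferentiableAt 𝕜 c x)
    (v : F) (w : E) : fderiv 𝕜 (fun y => c y v) x w = fderiv 𝕜 c x w v := by
  rw [fderiv_clm_apply hc (differentiableAt_const v)]
  simp

theorem fderiv_fderiv_apply_eq_mul_of_eventuallyEq {A : Type*} [NormedRing A]
    [NormedAlgebra 𝕜 A] {f : E → A} (hf : DifferentiableAt 𝕜 (fderiv 𝕜 f) x) {a : A} {v w : E}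
    (h : (fun y => fderiv 𝕜 f y v) =ᶠ[𝓝 x] fun y => a * fderiv 𝕜 f y w) (u : E) :
    fderiv 𝕜 (fderiv 𝕜 f) x u v = a * fderiv 𝕜 (fderiv 𝕜 f) x u w := by
  have hw : DifferentiableAt 𝕜 (fun y => fderiv 𝕜 f y w) x :=
    hf.clm_apply (differentiableAt_const w)
  rw [← fderiv_clm_apply_const_apply hf, ← fderiv_clm_apply_const_apply hf, h.fderiv_eq,
    fderiv_const_mul hw]
  rfl

theorem fderiv_fderiv_clm_comp_apply (L : F →L[𝕜] G) {f : E → F}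
    (hf : ∀ᶠ y in 𝓝 x, DifferentiableAt 𝕜 f y) (hf₂ : DifferentiableAt 𝕜 (fderiv 𝕜 f) x)
    (v w : E) :
    fderiv 𝕜 (fun y => fderiv 𝕜 (fun z => L (f z)) y v) x w =
      L (fderiv 𝕜 (fderiv 𝕜 f) x w v) := by
  have hcomp : (fun y => fderiv 𝕜 (fun z => L (f z)) y v) =ᶠ[𝓝 x]
      fun y => L (fderiv 𝕜 f y v) :=
    hf.mono fun y hy => by
      simp only [fderiv_fun_comp y L.differentiableAt hy, L.fderiv, ContinuousLinearMap.comp_apply]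
  rw [hcomp.fderiv_eq,
    fderiv_fun_comp x L.differentiableAt (hf₂.clm_apply (differentiableAt_const v)), L.fderiv,
    ContinuousLinearMap.comp_apply, fderiv_clm_apply_const_apply hf₂]

end SecondDerivative

theorem sum_apply_self_eq_sum_sq_mul {ι A : Type*} [Fintype ι] [CommSemiring A]
    (c : A → A → A) (hsymm : ∀ u v, c u v = c v u) (b : ι → A) (b₀ : A)
    (hc : ∀ u k, c u (b k) = b k * c u b₀) :
    ∑ k, c (b k) (b k) = (∑ k, b k ^ 2) * c b₀ b₀ := by
  rw [Finset.sum_mul]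
  refine Finset.sum_congr rfl fun k _ => ?_
  rw [hc, hsymm, hc]
  ring

theorem stmt7_general {A : Type*} [NormedCommRing A] [NormedAlgebra ℝ A] {p : ℕ}
    (e : Module.Basis (Fin (p + 1)) ℝ A)
    (hA0 : ∑ k, (e k) ^ 2 = 0)
    (U : Set A) (hU : IsOpen U) (f : A → A) (hf : ContDiffOn ℝ 2 f U)
    (hS : ∀ x ∈ U, ∀ k, fderiv ℝ f x (e k) = e k * fderiv ℝ f x (e 0)) :
    ∀ j : Fin (p + 1), ∀ x ∈ U,
      ∑ k, fderiv ℝ (fun y => fderiv ℝ (fun z => e.repr (f z) j) y (e k)) x (e k) = 0 := by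
  intro j x hx
  have : FiniteDimensional ℝ A := e.finiteDimensional_of_finite
  have hC2 : ∀ y ∈ U, ContDiffAt ℝ 2 f y := fun y hy => hf.contDiffAt (hU.mem_nhds hy)
  have hdiff : ∀ᶠ y in 𝓝 x, DifferentiableAt ℝ f y :=
    (hU.eventually_mem hx).mono fun y hy => (hC2 y hy).differentiableAt two_ne_zero
  have hd₂ : DifferentiableAt ℝ (fderiv ℝ f) x :=
    ((hC2 x hx).fderiv_right (m := 1) (by norm_num)).differentiableAt one_ne_zero
  have hS₂ : ∀ u k, fderiv ℝ (fderiv ℝ f) x u (e k) = e k * fderiv ℝ (fderiv ℝ f) x u (e 0) :=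
    fun u k => fderiv_fderiv_apply_eq_mul_of_eventuallyEq hd₂
      ((hU.eventually_mem hx).mono fun y hy => hS y hy k) u
  have hlap : ∑ k, fderiv ℝ (fderiv ℝ f) x (e k) (e k) = 0 := by
    rw [sum_apply_self_eq_sum_sq_mul _ ((hC2 x hx).isSymmSndFDerivAt (by simp)) e (e 0) hS₂,
      hA0, zero_mul]
  let L : A →L[ℝ] ℝ := LinearMap.toContinuousLinearMap (e.coord j)
  calc _ = ∑ k, L (fderiv ℝ (fderiv ℝ f) x (e k) (e k)) :=
        Finset.sum_congr rfl fun k _ => fderiv_fderiv_clm_comp_apply L hdiff hd₂ _ _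
    _ = 0 := by rw [← map_sum, hlap, map_zero]

/-- Under condition (A₀), each real component fⱼ (in the basis
e₀,…,e_p) of a C² S-differentiable function on an open set U ⊆ Λ₀ is harmonic. -/
theorem stmt7 {A : Type*} [NormedCommRing A] [NormedAlgebra ℝ A] {p : ℕ}
    (e : Module.Basis (Fin (p + 1)) ℝ A) (he0 : e 0 = 1)
    (hA0 : ∑ k, (e k) ^ 2 = 0)
    (U : Set A) (hU : IsOpen U) (f : A → A) (hf : ContDiffOn ℝ 2 f U)
    (hS : ∀ x ∈ U, ∀ k, fderiv ℝ f x (e k) = e k * fderiv ℝ f x (e 0)) :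
    ∀ j : Fin (p + 1), ∀ x ∈ U,
      ∑ k, fderiv ℝ (fun y => fderiv ℝ (fun z => e.repr (f z) j) y (e k)) x (e k) = 0 :=
  stmt7_general e hA0 U hU f hf hS
end

section
/- Let f be a homogeneous polynomial of degree d ≥ 2 on Λ₀ (in the real coordinates), S-differentiable, and suppose each partial derivative ∂f/∂yᵏ equals eₖ · b · y^{d-1} for a fixed b ∈ Λ₀ (with y the algebra variable). Then f(y) = (b/d) · y^d, obtained via the Euler-type integration f(y) = ∫₀¹ Df(ty)(y) dt. -/
/-! Differentiating `t ↦ f (t • y) = t ^ d • f y` at `t = 1` gives Euler's identity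
`Df(y) y = d • f y`. The hypothesis on the partial derivatives says that `Df(y)` agrees with
multiplication by `b * y ^ (d - 1)` on a basis, hence everywhere, so `d • f y = b * y ^ d`. -/

theorem fderiv_apply_self_eq_smul_of_homogeneous {E F : Type*}
    [NormedAddCommGroup E] [NormedSpace ℝ E] [NormedAddCommGroup F] [NormedSpace ℝ F]
    {f : E → F} {d : ℕ} {y : E} (hf : DifferentiableAt ℝ f y)
    (hhom : ∀ t : ℝ, f (t • y) = t ^ d • f y) :
    fderiv ℝ f y y = (d : ℝ) • f y := by
  have hray : HasDerivAt (fun t : ℝ => t • y) y 1 := by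
    simpa using (hasDerivAt_id (1 : ℝ)).smul_const y
  have hchain : HasDerivAt (fun t : ℝ => f (t • y)) (fderiv ℝ f y y) 1 :=
    hf.hasFDerivAt.comp_hasDerivAt_of_eq 1 hray (one_smul ℝ y).symm
  have hpow : HasDerivAt (fun t : ℝ => f (t • y)) ((d : ℝ) • f y) 1 := by
    simp_rw [hhom]
    simpa using (hasDerivAt_pow d (1 : ℝ)).smul_const (f y)
  exact hchain.unique hpow

theorem Module.Basis.apply_eq_mul_of_apply_basis {ι R A : Type*} [CommSemiring R] [Semiring A]
    [Algebra R A] (e : Module.Basis ι R A) {L : A →ₗ[R] A} {c : A}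
    (h : ∀ k, L (e k) = e k * c) (z : A) : L z = z * c := by
  rw [e.ext (f₂ := LinearMap.mulRight R c) h]
  rfl

theorem stmt12_general {A : Type*} [NormedCommRing A] [NormedAlgebra ℝ A] {p : ℕ}
    (e : Module.Basis (Fin (p + 1)) ℝ A)
    (f : A → A) (d : ℕ) (hd : 2 ≤ d)
    (hdiff : Differentiable ℝ f)
    (hhom : ∀ (t : ℝ) (y : A), f (t • y) = t ^ d • f y)
    (b : A)
    (hpart : ∀ (y : A) (k : Fin (p + 1)),
      fderiv ℝ f y (e k) = e k * (b * y ^ (d - 1))) :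
    ∀ y : A, f y = (d : ℝ)⁻¹ • (b * y ^ d) := by
  intro y
  have heuler := fderiv_apply_self_eq_smul_of_homogeneous (hdiff y) (hhom · y)
  have hderiv : fderiv ℝ f y y = y * (b * y ^ (d - 1)) :=
    e.apply_eq_mul_of_apply_basis (L := (fderiv ℝ f y : A →ₗ[ℝ] A)) (hpart y) y
  rw [hderiv, mul_left_comm, ← pow_succ', Nat.sub_add_cancel (by omega : 1 ≤ d)] at heuler
  have hd0 : (d : ℝ) ≠ 0 := by positivity
  rw [heuler, inv_smul_smul₀ hd0]

/-- If f is homogeneous of degree d ≥ 2, differentiable, and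
∂f/∂yᵏ(y) = eₖ·b·y^{d-1} for all k (with e₀ = 1), then f(y) = (1/d)·b·y^d. -/
theorem stmt12 {A : Type*} [NormedCommRing A] [NormedAlgebra ℝ A] {p : ℕ}
    (e : Module.Basis (Fin (p + 1)) ℝ A) (he0 : e 0 = 1)
    (f : A → A) (d : ℕ) (hd : 2 ≤ d)
    (hdiff : Differentiable ℝ f)
    (hhom : ∀ (t : ℝ) (y : A), f (t • y) = t ^ d • f y)
    (b : A)
    (hpart : ∀ (y : A) (k : Fin (p + 1)),
      fderiv ℝ f y (e k) = e k * (b * y ^ (d - 1))) :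
    ∀ y : A, f y = (d : ℝ)⁻¹ • (b * y ^ d) :=
  stmt12_general e f d hd hdiff hhom b hpart
end

section
/- Let Λ₀ be a finite-dimensional commutative real algebra satisfying condition (A₀), and suppose f : Λ₀ⁿ × Λ₁^m → Λ is qS-differentiable on all of the superspace and bounded in norm. Then f is constant. (Liouville-type theorem.) -/
/-!
Condition (A₀) makes `-1 = ∑_{k ≥ 1} e_k²` a sum of squares, so `-1` is a square in every residue
field of the finite-dimensional ℝ-algebra `Λ₀` (such a field embeds in ℂ and cannot lie in ℝ).
As `Λ₀` is Artinian, Newton's method lifts these square roots through the nilradical to a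
`j ∈ Λ₀` with `j² = -1`. S-differentiability says that `df` is `Λ₀`-linear, so it commutes with
multiplication by `j`. For every real functional `L` on `Λ₀`, the function
`u ↦ L(f(x + c(u)(y - x))) - i L(j f(x + c(u)(y - x)))`, where `c(a + ib) = a + bj`,
is then a bounded entire function. By Liouville's theorem it is constant, and comparing real parts
at `u = 0` and `u = 1` gives `L(f x) = L(f y)`.
-/

open Complex Polynomial Set Bornology

theorem exists_sq_eq_neg_one_of_isNilpotent {A : Type*} [CommRing A] (h2 : IsUnit (2 : A))
    {x : A} (hx : IsNilpotent (x ^ 2 + 1)) : ∃ j : A, j ^ 2 = -1 := by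
  have hx_unit : IsUnit x :=
    isUnit_of_mul_isUnit_left (y := x) <| by simpa [sq] using hx.isUnit_sub_one
  obtain ⟨j, ⟨-, hj⟩, -⟩ := existsUnique_nilpotent_sub_and_aeval_eq_zero (R := ℤ) (x := x)
    (P := X ^ 2 + 1) (by simpa using hx) (by simpa [map_ofNat] using h2.mul hx_unit)
  exact ⟨j, by simpa [add_eq_zero_iff_eq_neg] using hj⟩

theorem exists_sq_eq_neg_one_of_algHom_im_ne_zero {K : Type*} [Ring K] [Algebra ℝ K]
    (φ : K →ₐ[ℝ] ℂ) (hφ : Function.Injective φ) {b : K} (hb : (φ b).im ≠ 0) :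
    ∃ j : K, j ^ 2 = -1 := by
  refine ⟨(φ b).im⁻¹ • (b - algebraMap ℝ K (φ b).re), hφ ?_⟩
  have him : φ b - (φ b).re = (φ b).im * I := by apply Complex.ext <;> simp
  simp only [map_pow, map_smul, map_sub, AlgHom.commutes, map_neg, map_one,
    Complex.coe_algebraMap, him]
  rw [Complex.real_smul, ← mul_assoc, ← ofReal_mul, inv_mul_cancel₀ hb, ofReal_one, one_mul,
    I_sq]

theorem exists_sq_eq_neg_one_of_sum_sq_eq_zero {K ι : Type*} [Field K] [Algebra ℝ K]
    [FiniteDimensional ℝ K] [Fintype ι] (y : ι → K) (i₀ : ι) (hy₀ : y i₀ = 1)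
    (hy : ∑ i, y i ^ 2 = 0) : ∃ j : K, j ^ 2 = -1 := by
  let φ : K →ₐ[ℝ] ℂ := IsAlgClosed.lift
  by_contra! hK
  have him : ∀ i, (φ (y i)).im = 0 := fun i => by
    by_contra h
    obtain ⟨j, hj⟩ := exists_sq_eq_neg_one_of_algHom_im_ne_zero φ φ.toRingHom.injective h
    exact hK j hj
  have hre : ∑ i, (φ (y i)).re ^ 2 = 0 := by
    simpa [map_sum, Complex.re_sum, sq, him] using congrArg (fun z => (φ z).re) hy
  have := (Finset.sum_eq_zero_iff_of_nonneg (fun i _ => sq_nonneg _)).1 hre i₀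
    (Finset.mem_univ _)
  simp [hy₀] at this

theorem IsArtinianRing.exists_sq_eq_neg_one {A : Type*} [CommRing A] [IsArtinianRing A]
    (h2 : IsUnit (2 : A)) (h : ∀ I : MaximalSpectrum A, ∃ y : A ⧸ I.asIdeal, y ^ 2 = -1) :
    ∃ j : A, j ^ 2 = -1 := by
  choose y hy using h
  obtain ⟨x, hx⟩ := Ideal.Quotient.mk_surjective
    ((IsArtinianRing.quotNilradicalEquivPi A).symm y)
  refine exists_sq_eq_neg_one_of_isNilpotent h2 (x := x) ?_
  rw [← mem_nilradical, ← Ideal.Quotient.eq_zero_iff_mem, map_add, map_pow, hx, map_one,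
    ← map_pow, show y ^ 2 = -1 from funext hy, map_neg, map_one, neg_add_cancel]

theorem Module.Basis.exists_sq_eq_neg_one {A ι : Type*} [CommRing A] [Algebra ℝ A] [Fintype ι]
    (e : Module.Basis ι ℝ A) {i₀ : ι} (he : e i₀ = 1) (hsq : ∑ i, e i ^ 2 = 0) :
    ∃ j : A, j ^ 2 = -1 := by
  have : Module.Finite ℝ A := .of_basis e
  have : IsArtinianRing A := isArtinian_of_tower ℝ inferInstance
  refine IsArtinianRing.exists_sq_eq_neg_one
    (by simpa [map_ofNat] using (IsUnit.mk0 (2 : ℝ) two_ne_zero).map (algebraMap ℝ A))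
    fun I => ?_
  let _ : Field (A ⧸ I.asIdeal) := Ideal.Quotient.field I.asIdeal
  have : Module.Finite ℝ (A ⧸ I.asIdeal) :=
    .of_surjective (Ideal.Quotient.mkₐ ℝ I.asIdeal).toLinearMap
      (Ideal.Quotient.mkₐ_surjective ℝ _)
  exact exists_sq_eq_neg_one_of_sum_sq_eq_zero (fun i => Ideal.Quotient.mk I.asIdeal (e i)) i₀
    (by rw [he, map_one]) (by simp only [← map_pow, ← map_sum, hsq, map_zero])

theorem Module.Basis.map_smul_eq_mul_of_map_single {R A ι κ : Type*} [CommSemiring R]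
    [CommSemiring A] [Algebra R A] [Fintype κ] [DecidableEq κ] (e : Basis ι R A) {i₀ : ι}
    (he : e i₀ = 1) (T : (κ → A) →ₗ[R] A)
    (hT : ∀ k i, T (Pi.single k (e i)) = e i * T (Pi.single k (e i₀))) (c : A) (v : κ → A) :
    T (c • v) = c * T v := by
  have hsingle : ∀ k a, T (Pi.single k a) = a * T (Pi.single k 1) := fun k =>
    LinearMap.congr_fun (e.ext (f₁ := T ∘ₗ LinearMap.single R (fun _ => A) k)
      (f₂ := LinearMap.mulRight R (T (Pi.single k 1))) fun i => by simp [hT, he])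
  rw [← Finset.univ_sum_single v, Finset.smul_sum]
  simp only [← Pi.single_smul', map_sum, Finset.mul_sum, smul_eq_mul]
  refine Finset.sum_congr rfl fun k _ => ?_
  rw [hsingle k (c * v k), hsingle k (v k), mul_assoc]

section ComplexStructure

variable {E F : Type*} [NormedAddCommGroup E] [NormedSpace ℝ E] [NormedAddCommGroup F]
  [NormedSpace ℝ F]

noncomputable def complexifiedFunctional (J : F →L[ℝ] F) (L : StrongDual ℝ F) : F →L[ℝ] ℂ :=
  ofRealCLM ∘L L - I • (ofRealCLM ∘L L ∘L J)

theorem re_complexifiedFunctional (J : F →L[ℝ] F) (L : StrongDual ℝ F) (y : F) :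
    (complexifiedFunctional J L y).re = L y := by
  simp [complexifiedFunctional]

theorem complexifiedFunctional_apply_apply {J : F →L[ℝ] F} (hJ : ∀ y, J (J y) = -y)
    (L : StrongDual ℝ F) (y : F) :
    complexifiedFunctional J L (J y) = I * complexifiedFunctional J L y := by
  apply Complex.ext <;> simp [complexifiedFunctional, hJ]

theorem apply_eq_apply_of_fderiv_apply_eq {f : E → F} (J_E : E →L[ℝ] E) {J : F →L[ℝ] F}
    (hJ : ∀ y, J (J y) = -y) (hf : Differentiable ℝ f)
    (hfJ : ∀ x v, fderiv ℝ f x (J_E v) = J (fderiv ℝ f x v)) (hb : IsBounded (range f))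
    (x y : E) : f x = f y := by
  refine (SeparatingDual.eq_iff_forall_dual_eq (R := ℝ)).2 fun L => ?_
  set φ := complexifiedFunctional J L
  set Γ : ℂ →L[ℝ] E := reCLM.smulRight (y - x) + imCLM.smulRight (J_E (y - x))
  set H : ℂ → ℂ := fun u => φ (f (x + Γ u))
  have hH : ∀ u, HasFDerivAt H (φ ∘L fderiv ℝ f (x + Γ u) ∘L Γ) u := fun u =>
    φ.hasFDerivAt.comp u ((hf _).hasFDerivAt.comp u (Γ.hasFDerivAt.const_add x))
  have hH_entire : Differentiable ℂ H := fun u =>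
    differentiableAt_complex_iff_differentiableAt_real.2 ⟨(hH u).differentiableAt, by
      simp [(hH u).fderiv, Γ, hfJ, complexifiedFunctional_apply_apply hJ, φ, mul_sub]⟩
  have hH_bounded : IsBounded (range H) :=
    (φ.lipschitz.isBounded_image hb).subset
      (range_subset_iff.2 fun u => mem_image_of_mem _ (mem_range_self _))
  simpa [H, Γ, φ, re_complexifiedFunctional] using
    congrArg re (hH_entire.apply_eq_apply_of_bounded hH_bounded 0 1)

end ComplexStructure

/-- Liouville-type theorem (case m = 0). Under condition (A₀), a
function f : Λ₀ⁿ → Λ₀ which is differentiable, S-differentiable in each variable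
everywhere, and bounded in norm, is constant. -/
theorem stmt14 {A : Type*} [NormedCommRing A] [NormedAlgebra ℝ A] {p n : ℕ}
    (e : Module.Basis (Fin (p + 1)) ℝ A) (he0 : e 0 = 1)
    (hA0 : ∑ k, (e k) ^ 2 = 0)
    (f : (Fin n → A) → A) (hdiff : Differentiable ℝ f)
    (hS : ∀ x : Fin n → A, ∀ i : Fin n, ∀ k : Fin (p + 1),
      fderiv ℝ f x (Pi.single i (e k)) = e k * fderiv ℝ f x (Pi.single i (e 0)))
    (C : ℝ) (hbound : ∀ x, ‖f x‖ ≤ C) :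
    ∀ x y, f x = f y := by
  obtain ⟨j, hj⟩ := e.exists_sq_eq_neg_one he0 hA0
  refine apply_eq_apply_of_fderiv_apply_eq
    (.piMap fun _ => .mul ℝ A j) (J := .mul ℝ A j)
    (fun y => by simp [← mul_assoc, ← sq, hj]) hdiff (fun x v => ?_)
    (isBounded_iff_forall_norm_le.2 ⟨C, forall_mem_range.2 hbound⟩)
  exact e.map_smul_eq_mul_of_map_single he0 (fderiv ℝ f x).toLinearMap (hS x) j v
end

section
/- In the algebra Λ₀ of Example 4 of the paper (6-dimensional commutative algebra with basis e₀,…,e₅ and multiplication table: e₁² = -e₀, e₁e₂ = e₃, e₁e₃ = -e₂, e₁e₄ = e₅, e₁e₅ = -e₄, e₄² = e₄, e₄e₅ = e₅, e₅² = -e₄, and eᵢeⱼ = 0 for all other products of e₂,…,e₅), the set of nilpotent elements is exactly span(e₂, e₃). -/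
/-!
Modulo the square-zero ideal `span(e₂, e₃)`, the algebra `Λ₀` is `ℂ × ℂ`: sending `e₀, e₁, e₄, e₅`
to `(1, 1), (i, i), (0, 1), (0, i)` and `e₂, e₃` to `0` defines an algebra homomorphism whose kernel
is `span(e₂, e₃)`. As `ℂ × ℂ` is reduced, every nilpotent element lies in this kernel; conversely
every element of the kernel squares to zero.
-/

theorem Module.Basis.map_mul_of_map_basis_mul {ι R A B : Type*} [CommSemiring R]
    [NonUnitalNonAssocSemiring A] [Module R A] [SMulCommClass R A A] [IsScalarTower R A A]
    [NonUnitalNonAssocSemiring B] [Module R B] [SMulCommClass R B B] [IsScalarTower R B B]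
    (b : Module.Basis ι R A) (f : A →ₗ[R] B)
    (h : ∀ i j, f (b i * b j) = f (b i) * f (b j)) (x y : A) :
    f (x * y) = f x * f y := by
  have H : (LinearMap.mul R A).compr₂ f = (LinearMap.mul R B).compl₁₂ f f :=
    b.ext fun i => b.ext fun j => h i j
  exact congr($H x y)

theorem mul_self_eq_zero_of_mem_span_pair {R A : Type*} [CommSemiring R] [CommSemiring A]
    [Algebra R A] {a b x : A} (haa : a * a = 0) (hab : a * b = 0) (hbb : b * b = 0)
    (hx : x ∈ Submodule.span R {a, b}) : x * x = 0 := by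
  obtain ⟨s, t, rfl⟩ := Submodule.mem_span_pair.mp hx
  simp only [mul_add, add_mul, smul_mul_smul_comm, haa, hab, mul_comm b a, hbb, smul_zero,
    add_zero]

namespace Lambda0

noncomputable def toComplexProd {A : Type*} [Ring A] [Algebra ℝ A]
    (e : Module.Basis (Fin 6) ℝ A) : A →ₗ[ℝ] ℂ × ℂ :=
  e.constr ℝ ![(1, 1), (Complex.I, Complex.I), 0, 0, (0, 1), (0, Complex.I)]

variable {A : Type*} [CommRing A] [Algebra ℝ A] (e : Module.Basis (Fin 6) ℝ A)

@[simp]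
theorem toComplexProd_basis (i : Fin 6) :
    toComplexProd e (e i) = ![(1, 1), (Complex.I, Complex.I), 0, 0, (0, 1), (0, Complex.I)] i :=
  e.constr_basis ℝ _ i

theorem toComplexProd_one (h0 : e 0 = 1) : toComplexProd e 1 = 1 := by
  rw [← h0, toComplexProd_basis]
  rfl

theorem toComplexProd_mul (h0 : e 0 = 1)
    (h11 : e 1 * e 1 = -e 0) (h12 : e 1 * e 2 = e 3) (h13 : e 1 * e 3 = -e 2)
    (h14 : e 1 * e 4 = e 5) (h15 : e 1 * e 5 = -e 4)
    (h22 : e 2 * e 2 = 0) (h23 : e 2 * e 3 = 0) (h24 : e 2 * e 4 = 0) (h25 : e 2 * e 5 = 0)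
    (h33 : e 3 * e 3 = 0) (h34 : e 3 * e 4 = 0) (h35 : e 3 * e 5 = 0)
    (h44 : e 4 * e 4 = e 4) (h45 : e 4 * e 5 = e 5) (h55 : e 5 * e 5 = -e 4) (x y : A) :
    toComplexProd e (x * y) = toComplexProd e x * toComplexProd e y := by
  refine e.map_mul_of_map_basis_mul _ (fun i j => ?_) x y
  have h1 := toComplexProd_one e h0
  fin_cases i <;> fin_cases j <;>
    simp [h0, h11, h12, h13, h14, h15, h22, h23, h24, h25, h33, h34, h35, h44, h45, h55, h1,
      mul_comm (e _) (e 1), mul_comm (e _) (e 2), mul_comm (e _) (e 3), mul_comm (e _) (e 4),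
      Prod.ext_iff]

theorem mem_span_of_toComplexProd_eq_zero {x : A} (hx : toComplexProd e x = 0) :
    x ∈ Submodule.span ℝ {e 2, e 3} := by
  rw [← e.sum_repr x, Fin.sum_univ_six] at hx
  obtain ⟨⟨hx0, hx1⟩, hx4, hx5⟩ : (e.repr x 0 = 0 ∧ e.repr x 1 = 0) ∧
      e.repr x 0 + e.repr x 4 = 0 ∧ e.repr x 1 + e.repr x 5 = 0 := by
    simpa [Prod.ext_iff, Complex.ext_iff] using hx
  refine Submodule.mem_span_pair.mpr ⟨e.repr x 2, e.repr x 3, ?_⟩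
  conv_rhs => rw [← e.sum_repr x]
  rw [Fin.sum_univ_six, hx0, hx1, show e.repr x 4 = 0 by linarith,
    show e.repr x 5 = 0 by linarith]
  simp

end Lambda0

/-- In the 6-dimensional commutative algebra of Example 4 of the
paper, the set of nilpotent elements is exactly span(e₂, e₃). -/
theorem stmt15 {A : Type*} [CommRing A] [Algebra ℝ A]
    (e : Module.Basis (Fin 6) ℝ A) (h0 : e 0 = 1)
    (h11 : e 1 * e 1 = -e 0) (h12 : e 1 * e 2 = e 3) (h13 : e 1 * e 3 = -e 2)
    (h14 : e 1 * e 4 = e 5) (h15 : e 1 * e 5 = -e 4)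
    (h22 : e 2 * e 2 = 0) (h23 : e 2 * e 3 = 0) (h24 : e 2 * e 4 = 0)
    (h25 : e 2 * e 5 = 0)
    (h33 : e 3 * e 3 = 0) (h34 : e 3 * e 4 = 0) (h35 : e 3 * e 5 = 0)
    (h44 : e 4 * e 4 = e 4) (h45 : e 4 * e 5 = e 5) (h55 : e 5 * e 5 = -e 4) :
    ∀ x : A, IsNilpotent x ↔ x ∈ Submodule.span ℝ ({e 2, e 3} : Set A) := by
  intro x
  constructor
  · intro hx
    let χ : A →ₐ[ℝ] ℂ × ℂ := AlgHom.ofLinearMap (Lambda0.toComplexProd e)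
      (Lambda0.toComplexProd_one e h0)
      (Lambda0.toComplexProd_mul e h0 h11 h12 h13 h14 h15 h22 h23 h24 h25 h33 h34 h35 h44 h45 h55)
    exact Lambda0.mem_span_of_toComplexProd_eq_zero e (hx.map χ).eq_zero
  · intro hx
    exact ⟨2, (sq x).trans (mul_self_eq_zero_of_mem_span_pair h22 h23 h33 hx)⟩
end

section
/- For the algebra Λ₀ of Example 4 (as above), the S-differentiable function f : Λ₀ → Λ₀ defined by f(y) = y·e₂ has a non-discrete zero set: every element of the form e₃ + (1/n)e₂ for n ∈ ℕ* is a zero of f, and these accumulate at e₃, which is also a zero; moreover the image f(Λ₀) = span(e₂, e₃) is not open in Λ₀. Hence the isolated-zeros and open-mapping theorems of complex analysis fail in this setting. -/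
/-! Right multiplication by `e₂` is `ℝ`-linear, so its image is the span of the products
`eᵢ e₂`, which are `e₂, e₃, 0, 0, 0, 0`. That span misses `e₀`, and a proper subspace of a real
topological vector space has empty interior, so it is not open. Since `e₂² = e₃ e₂ = 0`, the whole
line `e₃ + ℝ e₂` consists of zeros of `y ↦ y e₂`. -/

open Filter Set Submodule Topology

theorem Submodule.eq_top_of_isOpen {𝕜 M : Type*} [NontriviallyNormedField 𝕜] [AddCommGroup M]
    [Module 𝕜 M] [TopologicalSpace M] [ContinuousAdd M] [ContinuousSMul 𝕜 M]
    {p : Submodule 𝕜 M} (hp : IsOpen (p : Set M)) : p = ⊤ :=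
  p.eq_top_of_nonempty_interior' ⟨0, by rw [hp.interior_eq]; exact p.zero_mem⟩

theorem Module.Basis.span_image_ne_top {ι R M : Type*} [Semiring R] [Nontrivial R]
    [AddCommMonoid M] [Module R M] (b : Module.Basis ι R M) {s : Set ι} {i : ι} (hi : i ∉ s) :
    span R (b '' s) ≠ ⊤ := fun h =>
  hi (b.self_mem_span_image.mp (h ▸ mem_top))

theorem Module.Basis.range_mul_right_eq_span {ι R A : Type*} [CommSemiring R] [Semiring A]
    [Algebra R A] (b : Module.Basis ι R A) (c : A) :
    range (· * c) = (span R (range fun i => b i * c) : Set A) := by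
  have h := LinearMap.range_eq_map (LinearMap.mulRight R c)
  rw [← b.span_eq, Submodule.map_span, ← Set.range_comp] at h
  exact congrArg ((↑) : Submodule R A → Set A) h

theorem tendsto_add_inv_natCast_smul {E : Type*} [AddCommGroup E] [Module ℝ E]
    [TopologicalSpace E] [ContinuousAdd E] [ContinuousSMul ℝ E] (x v : E) :
    Tendsto (fun n : ℕ => x + (n : ℝ)⁻¹ • v) atTop (𝓝 x) := by
  simpa using tendsto_const_nhds.add
    ((tendsto_inv_atTop_nhds_zero_nat (𝕜 := ℝ)).smul_const v)

theorem stmt16_general {A : Type*} [NormedCommRing A] [NormedAlgebra ℝ A]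
    (e : Module.Basis (Fin 6) ℝ A) (h0 : e 0 = 1)
    (h12 : e 1 * e 2 = e 3)
    (h22 : e 2 * e 2 = 0) (h23 : e 2 * e 3 = 0) (h24 : e 2 * e 4 = 0)
    (h25 : e 2 * e 5 = 0) :
    (∀ n : ℕ, 0 < n → (e 3 + (n : ℝ)⁻¹ • e 2) * e 2 = 0) ∧
    (e 3 * e 2 = 0) ∧
    Filter.Tendsto (fun n : ℕ => e 3 + (n : ℝ)⁻¹ • e 2) Filter.atTop (nhds (e 3)) ∧
    Set.range (fun y : A => y * e 2) =
      (Submodule.span ℝ ({e 2, e 3} : Set A) : Set A) ∧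
    ¬ IsOpen (Set.range fun y : A => y * e 2) := by
  have h32 : e 3 * e 2 = 0 := by rw [mul_comm, h23]
  have hrange : range (fun y : A => y * e 2) = (span ℝ ({e 2, e 3} : Set A) : Set A) := by
    rw [e.range_mul_right_eq_span]
    congr 1
    apply le_antisymm <;> rw [span_le]
    · rintro _ ⟨i, rfl⟩
      fin_cases i <;> simp [h0, h12, h22, mul_comm _ (e 2), h23, h24, h25] <;>
        exact subset_span (by simp)
    · rintro _ (rfl | rfl)
      exacts [subset_span ⟨0, by simp [h0]⟩, subset_span ⟨1, h12⟩]
  refine ⟨fun n _ => by rw [add_mul, smul_mul_assoc, h32, h22, smul_zero, add_zero], h32,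
    tendsto_add_inv_natCast_smul _ _, hrange, fun hopen => ?_⟩
  rw [hrange] at hopen
  have hpair : ({e 2, e 3} : Set A) = e '' {2, 3} := by simp [image_pair]
  exact e.span_image_ne_top (i := 0) (by decide) (hpair ▸ eq_top_of_isOpen hopen)

/-- In the algebra of Example 4, the S-differentiable function
f(y) = y·e₂ has non-discrete zero set (e₃ + (1/n)e₂ are zeros accumulating at
the zero e₃) and its image is span(e₂,e₃), which is not open: the
isolated-zeros and open-mapping theorems fail. -/
theorem stmt16 {A : Type*} [NormedCommRing A] [NormedAlgebra ℝ A]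
    (e : Module.Basis (Fin 6) ℝ A) (h0 : e 0 = 1)
    (h11 : e 1 * e 1 = -e 0) (h12 : e 1 * e 2 = e 3) (h13 : e 1 * e 3 = -e 2)
    (h14 : e 1 * e 4 = e 5) (h15 : e 1 * e 5 = -e 4)
    (h22 : e 2 * e 2 = 0) (h23 : e 2 * e 3 = 0) (h24 : e 2 * e 4 = 0)
    (h25 : e 2 * e 5 = 0)
    (h33 : e 3 * e 3 = 0) (h34 : e 3 * e 4 = 0) (h35 : e 3 * e 5 = 0)
    (h44 : e 4 * e 4 = e 4) (h45 : e 4 * e 5 = e 5) (h55 : e 5 * e 5 = -e 4) :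
    (∀ n : ℕ, 0 < n → (e 3 + (n : ℝ)⁻¹ • e 2) * e 2 = 0) ∧
    (e 3 * e 2 = 0) ∧
    Filter.Tendsto (fun n : ℕ => e 3 + (n : ℝ)⁻¹ • e 2) Filter.atTop (nhds (e 3)) ∧
    Set.range (fun y : A => y * e 2) =
      (Submodule.span ℝ ({e 2, e 3} : Set A) : Set A) ∧
    ¬ IsOpen (Set.range fun y : A => y * e 2) :=
  stmt16_general e h0 h12 h22 h23 h24 h25
end

section
/- Let Λ₀ be a commutative finite-dimensional real algebra with basis (e₀,…,e_p), e₀ = 1. Suppose b ∈ Λ₀ and constants (b_j^k)_{1≤j≤p, 0≤k≤p} satisfy: b_j^k + b_k^j = 0 for j,k ≥ 1 with j ≠ k; b_j^0 = Σ_{k=1}^p e_k b_k^j; and b_j^j = b for all j. Then b · Σ_{k=0}^{p} e_k² = 0. In particular, if Σ e_k² is not a zero divisor and nonzero, then b = 0. -/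
/-!
Substituting `b_j^0 = Σ_k e_k b_k^j` into `b = -Σ_j e_j b_j^0` turns `-b` into the quadratic form
`Σ_{j,k ≥ 1} e_j e_k b_k^j`. Antisymmetry kills its off-diagonal part and the diagonal contributes
`b Σ_{j ≥ 1} e_j²`, so `b (1 + Σ_{j ≥ 1} e_j²) = 0`; with `e_0 = 1` this is `b Σ_k e_k² = 0`.
-/

open Finset

namespace Finset

theorem sum_offDiag_eq_zero_of_add_swap_eq_zero {ι M : Type*} [DecidableEq ι] [AddCommMonoid M]
    (s : Finset ι) (f : ι × ι → M) (h : ∀ x ∈ s.offDiag, f x + f x.swap = 0) :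
    ∑ x ∈ s.offDiag, f x = 0 :=
  sum_involution (fun x _ => x.swap) h
    (fun x hx _ hswap => (mem_offDiag.1 hx).2.2 (congrArg Prod.snd hswap))
    (fun x hx => by
      obtain ⟨h₁, h₂, hne⟩ := mem_offDiag.1 hx
      exact mem_offDiag.2 ⟨h₂, h₁, hne.symm⟩)
    (fun x _ => x.swap_swap)

theorem sum_sum_mul_mul_eq_of_add_eq_zero {ι R : Type*} [DecidableEq ι] [CommRing R]
    (s : Finset ι) (x : ι → R) (M : ι → ι → R) (c : R)
    (hanti : ∀ j ∈ s, ∀ k ∈ s, j ≠ k → M j k + M k j = 0) (hdiag : ∀ j ∈ s, M j j = c) :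
    ∑ j ∈ s, ∑ k ∈ s, x j * x k * M j k = c * ∑ j ∈ s, x j ^ 2 := by
  have hoff : ∑ y ∈ s.offDiag, x y.1 * x y.2 * M y.1 y.2 = 0 := by
    refine sum_offDiag_eq_zero_of_add_swap_eq_zero s _ fun y hy => ?_
    obtain ⟨h₁, h₂, hne⟩ := mem_offDiag.1 hy
    calc x y.1 * x y.2 * M y.1 y.2 + x y.2 * x y.1 * M y.2 y.1
        = x y.1 * x y.2 * (M y.1 y.2 + M y.2 y.1) := by ring
      _ = 0 := by rw [hanti _ h₁ _ h₂ hne, mul_zero]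
  rw [← sum_product', ← diag_union_offDiag, sum_union (disjoint_diag_offDiag s), hoff, add_zero,
    sum_diag, mul_sum]
  exact sum_congr rfl fun j hj => by rw [hdiag j hj]; ring

end Finset

theorem stmt17_general {A : Type*} [CommRing A] {p : ℕ}
    (e : Fin (p + 1) → A) (he0 : e 0 = 1)
    (b : A) (B : Fin (p + 1) → Fin (p + 1) → A)
    (hanti : ∀ j k, j ≠ 0 → k ≠ 0 → j ≠ k → B j k + B k j = 0)
    (hb0 : ∀ j, j ≠ 0 → B j 0 = ∑ k ∈ Finset.univ.erase 0, e k * B k j)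
    (hdiag : ∀ j, j ≠ 0 → B j j = b)
    (hb : b = -∑ k ∈ Finset.univ.erase 0, e k * B k 0) :
    b * (∑ k, (e k) ^ 2) = 0 ∧
      ((¬∃ c : A, c ≠ 0 ∧ c * (∑ k, (e k) ^ 2) = 0) →
        (∑ k, (e k) ^ 2) ≠ 0 → b = 0) := by
  set s := univ.erase (0 : Fin (p + 1))
  have hanti_erase : ∀ j ∈ s, ∀ k ∈ s, j ≠ k → B k j + B j k = 0 := fun j hj k hk hne =>
    hanti k j (ne_of_mem_erase hk) (ne_of_mem_erase hj) hne.symm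
  have hquad : ∑ j ∈ s, e j * B j 0 = b * ∑ j ∈ s, e j ^ 2 := by
    rw [← sum_sum_mul_mul_eq_of_add_eq_zero s e (fun j k => B k j) b hanti_erase
      fun j hj => hdiag j (ne_of_mem_erase hj)]
    refine sum_congr rfl fun j hj => ?_
    rw [hb0 j (ne_of_mem_erase hj), mul_sum]
    exact sum_congr rfl fun k _ => by ring
  have hmain : b * ∑ k, e k ^ 2 = 0 := by
    rw [← sum_erase_add _ _ (mem_univ 0), he0, mul_add, ← hquad, hb]
    ring
  exact ⟨hmain, fun hnozd _ => by_contra fun hb' => hnozd ⟨b, hb', hmain⟩⟩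

/-- The algebraic obstruction computation: if the constants b_j^k
satisfy the antisymmetry relations, b_j^0 = Σ_{k≥1} e_k b_k^j, b_j^j = b (with
b = -Σ_{k≥1} e_k b_k^0 as in the paper's system), then b · Σ_{k=0}^p e_k² = 0;
in particular if Σ e_k² is nonzero and not a zero divisor, then b = 0. -/
theorem stmt17 {A : Type*} [CommRing A] {p : ℕ} (hp : 1 ≤ p)
    (e : Fin (p + 1) → A) (he0 : e 0 = 1)
    (b : A) (B : Fin (p + 1) → Fin (p + 1) → A)
    (hanti : ∀ j k, j ≠ 0 → k ≠ 0 → j ≠ k → B j k + B k j = 0)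
    (hb0 : ∀ j, j ≠ 0 → B j 0 = ∑ k ∈ Finset.univ.erase 0, e k * B k j)
    (hdiag : ∀ j, j ≠ 0 → B j j = b)
    (hb : b = -∑ k ∈ Finset.univ.erase 0, e k * B k 0) :
    b * (∑ k, (e k) ^ 2) = 0 ∧
      ((¬∃ c : A, c ≠ 0 ∧ c * (∑ k, (e k) ^ 2) = 0) →
        (∑ k, (e k) ^ 2) ≠ 0 → b = 0) :=
  stmt17_general e he0 b B hanti hb0 hdiag hb
end
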